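/- In the interdependent-type setting with two items {A, B}, two unit-demand agents, and a state s uniform on {A, B} (indicating which item is better) observed privately only by agent 1, where agent 1 values the better item at 1+ε and the other item at 1, and agent 2 values the better item at 2 and the other item at 0 (0 < ε < 1): (i) there exists an ε-BIC and IR mechanism with expected revenue 3 and expected social welfare 3 (namely: assign the reported better item to agent 2 at price 2 and the other item to agent 1 at price 1); (ii) every BIC and IR mechanism has expected revenue at most 2.5 + ε/2 and expected social welfare at most 2.5 + ε/2. Hence no BIC mechanism can achieve revenue loss less than 0.5 − ε/2 compared with the ε-BIC mechanism. -/
import Mathlib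


open Finset

namespace Stmt9

/-- Utility of agent 1 (who privately observes the better item `s` and reports `sr`):
agent 1 values the better item at `1 + ε` and the other item at `1`.
`q1 sr j` is the probability that agent 1 receives item `j` upon report `sr`. -/
noncomputable def u1 (ε : ℝ) (q1 : Bool → Bool → ℝ) (p1 : Bool → ℝ) (s sr : Bool) : ℝ :=
  (∑ j : Bool, q1 sr j * (if j = s then 1 + ε else 1)) - p1 sr

/-- Utility of agent 2: values the better item `s` at `2` and the other item at `0`. -/
noncomputable def u2 (q2 : Bool → Bool → ℝ) (p2 : Bool → ℝ) (s sr : Bool) : ℝ :=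
  (∑ j : Bool, q2 sr j * (if j = s then 2 else 0)) - p2 sr

/-- Feasibility: nonnegative probabilities, unit demand for each agent, each item
assigned at most once, and nonnegative payments. -/
def Feasible (q1 q2 : Bool → Bool → ℝ) (p1 p2 : Bool → ℝ) : Prop :=
  (∀ sr j, 0 ≤ q1 sr j) ∧ (∀ sr j, 0 ≤ q2 sr j) ∧
  (∀ sr, ∑ j : Bool, q1 sr j ≤ 1) ∧ (∀ sr, ∑ j : Bool, q2 sr j ≤ 1) ∧
  (∀ sr j, q1 sr j + q2 sr j ≤ 1) ∧ (∀ sr, 0 ≤ p1 sr) ∧ (∀ sr, 0 ≤ p2 sr)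

/-- Expected revenue over the uniform state. -/
noncomputable def Rev (p1 p2 : Bool → ℝ) : ℝ :=
  ∑ s : Bool, (1 / 2 : ℝ) * (p1 s + p2 s)

/-- Expected social welfare over the uniform state (truthful reporting). -/
noncomputable def Wel (ε : ℝ) (q1 q2 : Bool → Bool → ℝ) : ℝ :=
  ∑ s : Bool, (1 / 2 : ℝ) *
    ((∑ j : Bool, q1 s j * (if j = s then 1 + ε else 1))
      + ∑ j : Bool, q2 s j * (if j = s then 2 else 0))

end Stmt9

open Stmt9

/-- Failure of interdependent types: (i) the mechanism that assigns the
reported better item to agent 2 at price 2 and the other item to agent 1 at price 1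
is ε-BIC and IR, with expected revenue 3 and expected welfare 3; (ii) every BIC and
IR mechanism has expected revenue and welfare at most `2.5 + ε/2`; hence no BIC
mechanism achieves revenue loss less than `0.5 − ε/2`. -/
theorem failure_interdependent_types (ε : ℝ) (hε0 : 0 < ε) (hε1 : ε < 1) :
    -- (i) the named mechanism is ε-BIC and IR with revenue 3 and welfare 3
    (∃ (q1 q2 : Bool → Bool → ℝ) (p1 p2 : Bool → ℝ),
      (∀ sr j, q1 sr j = if j = sr then 0 else 1) ∧
      (∀ sr j, q2 sr j = if j = sr then 1 else 0) ∧
      (∀ sr, p1 sr = 1) ∧ (∀ sr, p2 sr = 2) ∧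
      Feasible q1 q2 p1 p2 ∧
      -- ε-BIC for agent 1
      (∀ s : Bool, u1 ε q1 p1 s s ≥ u1 ε q1 p1 s (!s) - ε) ∧
      -- IR in each state
      (∀ s : Bool, 0 ≤ u1 ε q1 p1 s s) ∧ (∀ s : Bool, 0 ≤ u2 q2 p2 s s) ∧
      Rev p1 p2 = 3 ∧ Wel ε q1 q2 = 3) ∧
    -- (ii) every feasible BIC and IR mechanism has revenue and welfare ≤ 2.5 + ε/2
    (∀ (q1 q2 : Bool → Bool → ℝ) (p1 p2 : Bool → ℝ),
      Feasible q1 q2 p1 p2 →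
      (∀ s : Bool, u1 ε q1 p1 s s ≥ u1 ε q1 p1 s (!s)) →
      (∀ s : Bool, 0 ≤ u1 ε q1 p1 s s) → (∀ s : Bool, 0 ≤ u2 q2 p2 s s) →
      Rev p1 p2 ≤ 2.5 + ε / 2 ∧ Wel ε q1 q2 ≤ 2.5 + ε / 2) := by
  constructor
  · refine ⟨fun sr j => if j = sr then 0 else 1, fun sr j => if j = sr then 1 else 0,
      fun _ => 1, fun _ => 2, fun _ _ => rfl, fun _ _ => rfl, fun _ => rfl, fun _ => rfl,
      ?_, ?_, ?_, ?_, ?_, ?_⟩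
    · refine ⟨?_, ?_, ?_, ?_, ?_, ?_, ?_⟩ <;>
        first
          | (intro sr j; cases sr <;> cases j <;> norm_num)
          | (intro sr; cases sr <;> simp [Fintype.sum_bool] <;> norm_num)
    · intro s; cases s <;> simp [u1, Fintype.sum_bool] <;> linarith
    · intro s; cases s <;> simp [u1, Fintype.sum_bool]
    · intro s; cases s <;> simp [u2, Fintype.sum_bool]
    · simp [Rev, Fintype.sum_bool]; norm_num
    · simp [Wel, Fintype.sum_bool]; try ring
  · intro q1 q2 p1 p2 hF hBIC hIR1 hIR2
    obtain ⟨hq1, hq2, hs1, hs2, hfe, hp1, hp2⟩ := hF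
    have hBt := hBIC true
    have hBf := hBIC false
    have hI1t := hIR1 true
    have hI1f := hIR1 false
    have hI2t := hIR2 true
    have hI2f := hIR2 false
    simp only [u1, u2, Fintype.sum_bool, Bool.not_true, Bool.not_false, ge_iff_le,
      if_pos rfl, if_true, if_false, sub_nonneg] at hBt hBf hI1t hI1f hI2t hI2f
    simp only [show (true = false) = False by simp, show (false = true) = False by simp,
      show (true = true) = True by simp, show (false = false) = True by simp,
      if_true, if_false] at hBt hBf hI1t hI1f hI2t hI2f
    have hst := hs1 true
    have hsf := hs1 false
    simp only [Fintype.sum_bool] at hst hsf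
    have hfet := hfe true true
    have hfef := hfe false false
    have hn1tt := hq1 true true
    have hn1tf := hq1 true false
    have hn1ft := hq1 false true
    have hn1ff := hq1 false false
    have hn2tt := hq2 true true
    have hn2ff := hq2 false false
    -- summed BIC: q1 false true + q1 true false ≤ q1 true true + q1 false false
    have hmul : ε * (q1 false true + q1 true false) ≤ ε * (q1 true true + q1 false false) := by
      nlinarith [hBt, hBf]
    have hS : q1 false true + q1 true false ≤ q1 true true + q1 false false :=
      le_of_mul_le_mul_left hmul hε0
    set S : ℝ := q1 true true + q1 false false with hSdef
    have key : (q1 true true + q1 true false) + (q1 false true + q1 false false)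
        ≤ 1 + ε * (1 - S) + 2 * S := by
      rcases le_total S 1 with h | h
      · nlinarith [mul_nonneg hε0.le (sub_nonneg.2 h)]
      · nlinarith [mul_nonneg (sub_nonneg.2 hε1.le) (sub_nonneg.2 h)]
    constructor
    · have : Rev p1 p2 = (1/2 : ℝ) * (p1 true + p2 true) + (1/2 : ℝ) * (p1 false + p2 false) := by
        simp [Rev, Fintype.sum_bool]; try ring
      rw [this]
      nlinarith [hI1t, hI1f, hI2t, hI2f, hfet, hfef, key]
    · have : Wel ε q1 q2 = (1/2 : ℝ) *
          ((q1 true true * (1+ε) + q1 true false + 2 * q2 true true)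
            + (q1 false false * (1+ε) + q1 false true + 2 * q2 false false)) := by
        simp [Wel, Fintype.sum_bool]; try ring
      rw [this]
      nlinarith [hfet, hfef, key]
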